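/- Let Ω ⊂ ℝ^N be a bounded open set with Lipschitz continuous boundary, let κ satisfy Assumption (A), let ξ > 0, and let Z_ad be a nonempty, closed and convex subset of L²(ℝ^N∖Ω, μ). Let J : L²(Ω) → ℝ be continuously Fréchet differentiable with, for each u, a gradient ∇J(u) ∈ L²(Ω) representing the derivative via J'(u)v = (∇J(u), v)_{L²(Ω)}. If z̄ minimizes 𝒥(z) := J(S_R z) + (ξ/2)‖z‖²_{L²(ℝ^N∖Ω,μ)} over Z_ad, then with ū := S_R z̄ and p̄ ∈ W^{s,2}_{Ω,κ} the unique weak solution of the adjoint problem (−Δ)^s p̄ = ∇J(ū) in Ω, 𝒩_s p̄ + κ p̄ = 0 in ℝ^N∖Ω, the variational inequality ∫_{ℝ^N∖Ω} (p̄ + ξ z̄)(z − z̄) κ dx ≥ 0 holds for every z ∈ Z_ad. This variational inequality holds if and only if z̄ is the unique element of Z_ad minimizing z ↦ ‖z + p̄/ξ‖_{L²(ℝ^N∖Ω,μ)} over Z_ad. Moreover, if J is convex, then any z̄ ∈ Z_ad satisfying the variational inequality is a global minimizer of 𝒥 over Z_ad. -/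

import Mathlib

open MeasureTheory Set Filter Topology
open scoped ENNReal

noncomputable section

/-- Euclidean space `ℝ^N`. -/
abbrev RN (N : ℕ) := EuclideanSpace ℝ (Fin N)

/-- The normalizing constant `C_{N,s}`. -/
def Cns (N : ℕ) (s : ℝ) : ℝ :=
  s * 2 ^ (2 * s) * Real.Gamma ((2 * s + N) / 2) /
    (Real.pi ^ ((N : ℝ) / 2) * Real.Gamma (1 - s))

/-- The kernel denominator `|x-y|^{N+2s}`. -/
def Kden (N : ℕ) (s : ℝ) (x y : RN N) : ℝ := ‖x - y‖ ^ ((N : ℝ) + 2 * s)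

/-- Extended-real squared Gagliardo seminorm of `u` over a set `A ⊆ ℝ^N × ℝ^N`. -/
def gagE (N : ℕ) (s : ℝ) (A : Set (RN N × RN N)) (u : RN N → ℝ) : ℝ≥0∞ :=
  ∫⁻ p in A, ENNReal.ofReal ((u p.1 - u p.2) ^ 2 / Kden N s p.1 p.2)

/-- Bilinear Gagliardo form of `u, v` over `A ⊆ ℝ^N × ℝ^N` (Bochner integral). -/
def gagB (N : ℕ) (s : ℝ) (A : Set (RN N × RN N)) (u v : RN N → ℝ) : ℝ :=
  ∫ p in A, (u p.1 - u p.2) * (v p.1 - v p.2) / Kden N s p.1 p.2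

/-- The set `Q := ℝ^{2N} ∖ (ℝ^N∖Ω)²`. -/
def QSet {N : ℕ} (Ω : Set (RN N)) : Set (RN N × RN N) := (Ωᶜ ×ˢ Ωᶜ)ᶜ

/-- Membership in `W^{s,2}(ℝ^N)`. -/
def MemWs (N : ℕ) (s : ℝ) (u : RN N → ℝ) : Prop :=
  MemLp u 2 volume ∧ gagE N s univ u < ⊤

/-- Squared `W^{s,2}(ℝ^N)`-norm. -/
def WsNormSq (N : ℕ) (s : ℝ) (u : RN N → ℝ) : ℝ :=
  (∫ x, (u x) ^ 2) + (gagE N s univ u).toReal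

/-- Membership in `W^{s,2}_0(Ω̄)`. -/
def MemWs0 (N : ℕ) (s : ℝ) (Ω : Set (RN N)) (u : RN N → ℝ) : Prop :=
  MemWs N s u ∧ ∀ᵐ x ∂(volume.restrict Ωᶜ), u x = 0

/-- Squared `W^{s,2}_0(Ω̄)`-norm (the full Gagliardo seminorm). -/
def Ws0NormSq (N : ℕ) (s : ℝ) (u : RN N → ℝ) : ℝ := (gagE N s univ u).toReal

/-- Membership in `W^{s,2}(ℝ^N ∖ Ω)`. -/
def MemWsExt (N : ℕ) (s : ℝ) (Ω : Set (RN N)) (z : RN N → ℝ) : Prop :=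
  MemLp z 2 (volume.restrict Ωᶜ) ∧ gagE N s (Ωᶜ ×ˢ Ωᶜ) z < ⊤

/-- Squared `W^{s,2}(ℝ^N ∖ Ω)`-norm. -/
def WsExtNormSq (N : ℕ) (s : ℝ) (Ω : Set (RN N)) (z : RN N → ℝ) : ℝ :=
  (∫ x in Ωᶜ, (z x) ^ 2) + (gagE N s (Ωᶜ ×ˢ Ωᶜ) z).toReal

/-- The interaction operator (nonlocal normal derivative) `𝒩_s`. -/
def Iop (N : ℕ) (s : ℝ) (Ω : Set (RN N)) (u : RN N → ℝ) (x : RN N) : ℝ :=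
  Cns N s * ∫ y in Ω, (u x - u y) / Kden N s x y

/-- `F` represents an element of the dual space `W^{-s,2}(Ω̄)` of `W^{s,2}_0(Ω̄)`. -/
structure MemDualWs0 (N : ℕ) (s : ℝ) (Ω : Set (RN N)) (F : (RN N → ℝ) → ℝ) : Prop where
  congr : ∀ u v, MemWs0 N s Ω u → MemWs0 N s Ω v → u =ᵐ[volume] v → F u = F v
  map_add : ∀ u v, MemWs0 N s Ω u → MemWs0 N s Ω v → F (u + v) = F u + F v
  map_smul : ∀ (c : ℝ) u, MemWs0 N s Ω u → F (c • u) = c * F u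
  bdd : ∃ M : ℝ, ∀ u, MemWs0 N s Ω u → |F u| ≤ M * Real.sqrt (Ws0NormSq N s u)

/-- Dual norm on `W^{-s,2}(Ω̄)`. -/
def dualNormWs0 (N : ℕ) (s : ℝ) (Ω : Set (RN N)) (F : (RN N → ℝ) → ℝ) : ℝ :=
  sInf {M : ℝ | 0 ≤ M ∧ ∀ u, MemWs0 N s Ω u → |F u| ≤ M * Real.sqrt (Ws0NormSq N s u)}

/-- `Ω` has a Lipschitz continuous boundary: near every boundary point, after a rotation
(linear isometry), `Ω` is the region above the graph of a Lipschitz function. -/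
def HasLipschitzBoundary {N : ℕ} (Ω : Set (RN N)) : Prop :=
  ∀ x ∈ frontier Ω, ∃ r : ℝ, 0 < r ∧
    ∃ (e : RN N ≃ₗᵢ[ℝ] RN N) (j : Fin N)
      (φ : ({ i : Fin N // i ≠ j } → ℝ) → ℝ) (L : NNReal),
      LipschitzWith L φ ∧
        ∀ y ∈ Metric.ball x r, (y ∈ Ω ↔ φ (fun i => e y i.1) < e y j)

/-- Weak solution of the Dirichlet exterior value problem
`(−Δ)^s u = F in Ω`, `u = z in ℝ^N∖Ω`. -/
def IsWeakSolDirichlet (N : ℕ) (s : ℝ) (Ω : Set (RN N)) (F : (RN N → ℝ) → ℝ)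
    (z u : RN N → ℝ) : Prop :=
  MemWs N s u ∧ (∀ᵐ x ∂(volume.restrict Ωᶜ), u x = z x) ∧
    ∀ v, MemWs0 N s Ω v → Cns N s / 2 * gagB N s univ u v = F v

/-- `v ∈ V = {v ∈ W^{s,2}_0(Ω̄) : (−Δ)^s v ∈ L²(Ω)}` with fractional Laplacian `w`. -/
def IsFracLapOf (N : ℕ) (s : ℝ) (Ω : Set (RN N)) (v w : RN N → ℝ) : Prop :=
  MemWs0 N s Ω v ∧ MemLp w 2 (volume.restrict Ω) ∧
    ∀ φ, MemWs0 N s Ω φ → Cns N s / 2 * gagB N s univ v φ = ∫ x in Ω, w x * φ x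

/-- Very-weak solution of the Dirichlet exterior value problem
`(−Δ)^s u = F in Ω`, `u = z in ℝ^N∖Ω`. -/
def IsVeryWeakSolDirichlet (N : ℕ) (s : ℝ) (Ω : Set (RN N)) (F : (RN N → ℝ) → ℝ)
    (z u : RN N → ℝ) : Prop :=
  MemLp u 2 volume ∧ (∀ᵐ x ∂(volume.restrict Ωᶜ), u x = z x) ∧
    ∀ v w, IsFracLapOf N s Ω v w →
      ∫ x in Ω, u x * w x = F v - ∫ x in Ωᶜ, z x * Iop N s Ω v x

/-- Membership in `W^{s,2}_{Ω,g}`. -/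
def MemWg (N : ℕ) (s : ℝ) (Ω : Set (RN N)) (g : RN N → ℝ) (u : RN N → ℝ) : Prop :=
  Measurable u ∧ (∫⁻ x in Ω, ENNReal.ofReal ((u x) ^ 2)) < ⊤ ∧
    (∫⁻ x in Ωᶜ, ENNReal.ofReal (|g x| * (u x) ^ 2)) < ⊤ ∧
    gagE N s (QSet Ω) u < ⊤

/-- Squared `W^{s,2}_{Ω,g}`-norm. -/
def WgNormSq (N : ℕ) (s : ℝ) (Ω : Set (RN N)) (g : RN N → ℝ) (u : RN N → ℝ) : ℝ :=
  (∫ x in Ω, (u x) ^ 2) + (∫ x in Ωᶜ, |g x| * (u x) ^ 2) + (gagE N s (QSet Ω) u).toReal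

/-- The measure `μ = κ dx` on `ℝ^N ∖ Ω`. -/
def muMeas {N : ℕ} (Ω : Set (RN N)) (κ : RN N → ℝ) : Measure (RN N) :=
  (volume.restrict Ωᶜ).withDensity fun x => ENNReal.ofReal (κ x)

/-- Assumption (A) on the coefficient `κ`. -/
structure AssumpA {N : ℕ} (Ω : Set (RN N)) (κ : RN N → ℝ) : Prop where
  meas : Measurable κ
  nonneg : ∀ x, 0 ≤ κ x
  memL1 : IntegrableOn κ Ωᶜ
  memLinfty : ∃ Cb : ℝ, ∀ᵐ x ∂(volume.restrict Ωᶜ), κ x ≤ Cb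
  cpt : IsCompact (tsupport κ)
  suppSubset : tsupport κ ⊆ Ωᶜ
  pos : ∀ᵐ x ∂(volume.restrict (tsupport κ)), 0 < κ x

/-- `F` represents an element of the dual space `(W^{s,2}_{Ω,κ})⋆`. -/
structure MemDualWkap (N : ℕ) (s : ℝ) (Ω : Set (RN N)) (κ : RN N → ℝ)
    (F : (RN N → ℝ) → ℝ) : Prop where
  congr : ∀ u v, MemWg N s Ω κ u → MemWg N s Ω κ v → u =ᵐ[volume] v → F u = F v
  map_add : ∀ u v, MemWg N s Ω κ u → MemWg N s Ω κ v → F (u + v) = F u + F v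
  map_smul : ∀ (c : ℝ) u, MemWg N s Ω κ u → F (c • u) = c * F u
  bdd : ∃ M : ℝ, ∀ u, MemWg N s Ω κ u → |F u| ≤ M * Real.sqrt (WgNormSq N s Ω κ u)

/-- Dual norm on `(W^{s,2}_{Ω,κ})⋆`. -/
def dualNormWkap (N : ℕ) (s : ℝ) (Ω : Set (RN N)) (κ : RN N → ℝ)
    (F : (RN N → ℝ) → ℝ) : ℝ :=
  sInf {M : ℝ | 0 ≤ M ∧ ∀ u, MemWg N s Ω κ u → |F u| ≤ M * Real.sqrt (WgNormSq N s Ω κ u)}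

/-- Weak solution of the Robin exterior value problem
`(−Δ)^s u = F in Ω`, `𝒩_s u + κ u = κ z in ℝ^N∖Ω`. -/
def IsWeakSolRobin (N : ℕ) (s : ℝ) (Ω : Set (RN N)) (κ : RN N → ℝ)
    (F : (RN N → ℝ) → ℝ) (z u : RN N → ℝ) : Prop :=
  MemWg N s Ω κ u ∧
    ∀ v, MemWg N s Ω κ v →
      gagB N s (QSet Ω) u v + ∫ x in Ωᶜ, κ x * u x * v x =
        F v + ∫ x in Ωᶜ, κ x * z x * v x

/-- Weak solution of the regularized (Robin-penalized) problem with parameter `n`: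
`(−Δ)^s u = 0 in Ω`, `𝒩_s u + nκ u = nκ z in ℝ^N∖Ω`. -/
def IsWeakSolPen (N : ℕ) (s : ℝ) (Ω : Set (RN N)) (κ : RN N → ℝ) (n : ℕ)
    (z u : RN N → ℝ) : Prop :=
  MemWg N s Ω κ u ∧ (∫⁻ x in Ωᶜ, ENNReal.ofReal ((u x) ^ 2)) < ⊤ ∧
    ∀ v, MemWg N s Ω κ v → (∫⁻ x in Ωᶜ, ENNReal.ofReal ((v x) ^ 2)) < ⊤ →
      Cns N s / 2 * gagB N s (QSet Ω) u v + n * ∫ x in Ωᶜ, κ x * u x * v x =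
        n * ∫ x in Ωᶜ, κ x * z x * v x

/-!
Along a segment `z̄ + t (z - z̄)` the reduced cost is differentiable at `t = 0`. The Robin solution
operator is affine on `Ω`: two weak solutions with the same data differ by a function of zero
Gagliardo energy on `Q`, hence by a constant, which vanishes `μ`-a.e. and so is zero once `μ ≠ 0`.
Testing the state equation with `p̄` and the adjoint equation with `S_R z - S_R z̄`, the symmetry of
the form turns `∫_Ω ∇J(ū) (S_R z - S_R z̄)` into `∫ (z - z̄) p̄ dμ`, so minimality at `t = 0` gives
the variational inequality. Expanding `‖z + p̄/ξ‖²` around `z̄` shows that the inequality is the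
first-order condition for projecting `-p̄/ξ` onto `Z_ad`, with uniqueness from the quadratic
remainder; for convex `J` the gradient inequality `J v - J u ≥ (∇J(u), v - u)` turns the same
expansion into a global lower bound.
-/

theorem nonneg_of_isMinOn_of_hasDerivWithinAt {φ : ℝ → ℝ} {A : ℝ}
    (hmin : IsMinOn φ (Icc 0 1) 0) (hφ : HasDerivWithinAt φ A (Ici 0) 0) : 0 ≤ A := by
  have hslope : Tendsto (slope φ 0) (𝓝[>] 0) (𝓝 A) := by
    simpa using hasDerivWithinAt_iff_tendsto_slope.1 hφ.Ioi_of_Ici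
  refine ge_of_tendsto hslope ?_
  filter_upwards [Ioc_mem_nhdsGT (zero_lt_one' ℝ)] with t ht
  rw [slope_def_field, sub_zero]
  exact div_nonneg (sub_nonneg.2 (hmin ⟨ht.1.le, ht.2⟩)) ht.1.le

section L2

variable {α : Type*} [MeasurableSpace α] {μ : Measure α}

theorem integral_add_mul_sq {a e : α → ℝ} (ha : MemLp a 2 μ) (he : MemLp e 2 μ) (t : ℝ) :
    ∫ x, (a x + t * e x) ^ 2 ∂μ =
      ∫ x, a x ^ 2 ∂μ + t * (2 * ∫ x, a x * e x ∂μ) + t ^ 2 * ∫ x, e x ^ 2 ∂μ := by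
  have hae : Integrable (fun x => t * (2 * (a x * e x))) μ :=
    ((ha.integrable_mul he).const_mul 2).const_mul t
  have hee : Integrable (fun x => t ^ 2 * e x ^ 2) μ := he.integrable_sq.const_mul _
  have haa : Integrable (fun x => a x ^ 2 + t * (2 * (a x * e x))) μ :=
    ha.integrable_sq.add hae
  rw [show (fun x => (a x + t * e x) ^ 2) =
      fun x => a x ^ 2 + t * (2 * (a x * e x)) + t ^ 2 * e x ^ 2 from funext fun x => by ring,
    integral_add haa hee, integral_add ha.integrable_sq hae,
    integral_const_mul, integral_const_mul, integral_const_mul]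

theorem integral_sq_eq_add {a b : α → ℝ} (ha : MemLp a 2 μ) (hb : MemLp b 2 μ) :
    ∫ x, b x ^ 2 ∂μ =
      ∫ x, a x ^ 2 ∂μ + 2 * ∫ x, a x * (b x - a x) ∂μ + ∫ x, (b x - a x) ^ 2 ∂μ := by
  simpa using integral_add_mul_sq ha (hb.sub ha) 1

theorem hasDerivAt_integral_add_mul_sq {a e : α → ℝ} (ha : MemLp a 2 μ) (he : MemLp e 2 μ) :
    HasDerivAt (fun t : ℝ => ∫ x, (a x + t * e x) ^ 2 ∂μ) (2 * ∫ x, a x * e x ∂μ) 0 := by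
  simp_rw [integral_add_mul_sq ha he]
  exact ((((hasDerivAt_const (0:ℝ) _).add ((hasDerivAt_id' 0).mul_const _)).add
    ((hasDerivAt_pow 2 0).mul_const _))).congr_deriv (by norm_num)

theorem lintegral_ofReal_mul_sq_add_smul_lt_top {w f g : α → ℝ} (hw : ∀ x, 0 ≤ w x)
    (hwm : Measurable w) (hfm : Measurable f) (hgm : Measurable g)
    (hf : ∫⁻ x, ENNReal.ofReal (w x * f x ^ 2) ∂μ < ⊤)
    (hg : ∫⁻ x, ENNReal.ofReal (w x * g x ^ 2) ∂μ < ⊤) (c : ℝ) :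
    ∫⁻ x, ENNReal.ofReal (w x * (f x + c * g x) ^ 2) ∂μ < ⊤ := by
  have hint : ∀ {h : α → ℝ}, Measurable h →
      (∫⁻ x, ENNReal.ofReal (w x * h x ^ 2) ∂μ < ⊤ ↔ Integrable (fun x => w x * h x ^ 2) μ) :=
    fun hh => lt_top_iff_ne_top.trans (lintegral_ofReal_ne_top_iff_integrable (by fun_prop)
      (ae_of_all _ fun x => mul_nonneg (hw x) (sq_nonneg _)))
  rw [hint hfm] at hf
  rw [hint hgm] at hg
  rw [hint (h := fun x => f x + c * g x) (by fun_prop)]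
  refine Integrable.mono' ((hf.const_mul 2).add (hg.const_mul (2 * c ^ 2))) (by fun_prop)
    (ae_of_all _ fun x => ?_)
  rw [Real.norm_eq_abs, abs_of_nonneg (mul_nonneg (hw x) (sq_nonneg _)), Pi.add_apply]
  nlinarith [mul_nonneg (hw x) (sq_nonneg (f x - c * g x))]

def HasL2Gradient (μ : Measure α) (J : (α → ℝ) → ℝ) (DJ : (α → ℝ) → α → ℝ) : Prop :=
  ∀ u, MemLp u 2 μ → ∀ ε : ℝ, 0 < ε → ∃ δ : ℝ, 0 < δ ∧
    ∀ h : α → ℝ, MemLp h 2 μ → Real.sqrt (∫ x, (h x) ^ 2 ∂μ) ≤ δ →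
      |J (u + h) - J u - ∫ x, DJ u x * h x ∂μ| ≤ ε * Real.sqrt (∫ x, (h x) ^ 2 ∂μ)

theorem sqrt_integral_smul_sq (h : α → ℝ) (t : ℝ) :
    √(∫ x, (t • h) x ^ 2 ∂μ) = |t| * √(∫ x, h x ^ 2 ∂μ) := by
  simp_rw [Pi.smul_apply, smul_eq_mul, mul_pow, integral_const_mul,
    Real.sqrt_mul (sq_nonneg t), Real.sqrt_sq_eq_abs]

theorem HasL2Gradient.hasDerivAt_line {J : (α → ℝ) → ℝ} {DJ : (α → ℝ) → α → ℝ}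
    (hJ : HasL2Gradient μ J DJ) {u h : α → ℝ} (hu : MemLp u 2 μ) (hh : MemLp h 2 μ) :
    HasDerivAt (fun t : ℝ => J (u + t • h)) (∫ x, DJ u x * h x ∂μ) 0 := by
  rw [hasDerivAt_iff_isLittleO_nhds_zero, Asymptotics.isLittleO_iff]
  intro c hc
  set S := √(∫ x, h x ^ 2 ∂μ)
  have hS : 0 ≤ S := Real.sqrt_nonneg _
  obtain ⟨δ, hδ, hJδ⟩ := hJ u hu (c / (S + 1)) (by positivity)
  filter_upwards [Metric.ball_mem_nhds (0:ℝ) (div_pos hδ (by positivity : 0 < S + 1))]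
    with t ht
  rw [Metric.mem_ball, dist_zero_right, Real.norm_eq_abs, lt_div_iff₀ (by positivity)] at ht
  have hsmall : √(∫ x, (t • h) x ^ 2 ∂μ) ≤ δ := by
    rw [sqrt_integral_smul_sq]; nlinarith [abs_nonneg t]
  have hbound := hJδ (t • h) (hh.const_smul t) hsmall
  have hlin : ∫ x, DJ u x * (t • h) x ∂μ = t * ∫ x, DJ u x * h x ∂μ := by
    simp_rw [Pi.smul_apply, smul_eq_mul, mul_left_comm _ t]
    exact integral_const_mul _ _
  rw [hlin, sqrt_integral_smul_sq] at hbound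
  simp only [zero_add, zero_smul, add_zero, smul_eq_mul, Real.norm_eq_abs]
  calc |J (u + t • h) - J u - t * ∫ x, DJ u x * h x ∂μ|
      ≤ c / (S + 1) * (|t| * S) := hbound
    _ ≤ c * |t| := by
      rw [div_mul_eq_mul_div, div_le_iff₀ (by positivity)]
      nlinarith [abs_nonneg t, mul_nonneg hc.le (abs_nonneg t)]

theorem HasL2Gradient.integral_mul_sub_le {J : (α → ℝ) → ℝ} {DJ : (α → ℝ) → α → ℝ}
    (hJ : HasL2Gradient μ J DJ)
    (hconv : ∀ (u v : α → ℝ) (t : ℝ), MemLp u 2 μ → MemLp v 2 μ → 0 ≤ t → t ≤ 1 →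
      J (t • u + (1 - t) • v) ≤ t * J u + (1 - t) * J v)
    {u v : α → ℝ} (hu : MemLp u 2 μ) (hv : MemLp v 2 μ) :
    ∫ x, DJ u x * (v x - u x) ∂μ ≤ J v - J u := by
  have hline := hJ.hasDerivAt_line hu (hv.sub hu)
  have hmin :
      IsMinOn (fun t : ℝ => t * (J v - J u) - (J (u + t • (v - u)) - J u)) (Icc 0 1) 0 := by
    intro t ht
    have hJt := hconv v u t hv hu ht.1 ht.2
    rw [show t • v + (1 - t) • u = u + t • (v - u) by module] at hJt
    show (0:ℝ) * (J v - J u) - (J (u + (0:ℝ) • (v - u)) - J u) ≤ _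
    rw [zero_smul, add_zero]
    linarith
  have := nonneg_of_isMinOn_of_hasDerivWithinAt hmin
    ((((hasDerivAt_id' 0).mul_const (J v - J u)).sub (hline.sub_const (J u))).hasDerivWithinAt)
  simp only [one_mul, Pi.sub_apply] at this
  linarith

theorem integral_sub_sq_nonneg (z zbar : α → ℝ) : 0 ≤ ∫ x, (z x - zbar x) ^ 2 ∂μ :=
  integral_nonneg fun _ => sq_nonneg _

variable {z zbar q : α → ℝ}

theorem integral_add_sq_eq (hz : MemLp z 2 μ) (hzbar : MemLp zbar 2 μ) (hq : MemLp q 2 μ) :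
    ∫ x, (z x + q x) ^ 2 ∂μ = ∫ x, (zbar x + q x) ^ 2 ∂μ +
      2 * ∫ x, (zbar x + q x) * (z x - zbar x) ∂μ + ∫ x, (z x - zbar x) ^ 2 ∂μ := by
  simpa only [add_sub_add_right_eq_sub] using integral_sq_eq_add
    (a := fun x => zbar x + q x) (b := fun x => z x + q x) (hzbar.add hq) (hz.add hq)

theorem ae_eq_of_integral_add_sq_le (hz : MemLp z 2 μ) (hzbar : MemLp zbar 2 μ)
    (hq : MemLp q 2 μ) (hvi : 0 ≤ ∫ x, (zbar x + q x) * (z x - zbar x) ∂μ)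
    (hle : ∫ x, (z x + q x) ^ 2 ∂μ ≤ ∫ x, (zbar x + q x) ^ 2 ∂μ) : z =ᵐ[μ] zbar := by
  have hsq : ∫ x, (z x - zbar x) ^ 2 ∂μ = 0 := by
    have := integral_add_sq_eq hz hzbar hq
    linarith [integral_sub_sq_nonneg (μ := μ) z zbar]
  filter_upwards [(integral_eq_zero_iff_of_nonneg_ae (ae_of_all _ fun x => sq_nonneg _)
    (hz.sub hzbar).integrable_sq).1 hsq] with x hx
  simpa [sub_eq_zero] using hx

theorem integral_mul_sub_nonneg_iff {K : Set (α → ℝ)} (hK : Convex ℝ K)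
    (hKL : ∀ z ∈ K, MemLp z 2 μ) (hzbar : zbar ∈ K) (hq : MemLp q 2 μ) :
    (∀ z ∈ K, 0 ≤ ∫ x, (zbar x + q x) * (z x - zbar x) ∂μ) ↔
      ∀ z ∈ K, ∫ x, (zbar x + q x) ^ 2 ∂μ ≤ ∫ x, (z x + q x) ^ 2 ∂μ := by
  refine ⟨fun hvi z hz => ?_, fun hmin z hz => ?_⟩
  · rw [integral_add_sq_eq (hKL z hz) (hKL zbar hzbar) hq]
    linarith [hvi z hz, integral_sub_sq_nonneg (μ := μ) z zbar]
  · have hline : ∀ t : ℝ, ∫ x, ((zbar + t • (z - zbar)) x + q x) ^ 2 ∂μ =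
        ∫ x, ((zbar x + q x) + t * (z x - zbar x)) ^ 2 ∂μ := fun t =>
      integral_congr_ae (ae_of_all _ fun x => by
        simp only [Pi.add_apply, Pi.smul_apply, Pi.sub_apply, smul_eq_mul]
        ring)
    have hφ : IsMinOn (fun t : ℝ => ∫ x, ((zbar x + q x) + t * (z x - zbar x)) ^ 2 ∂μ)
        (Icc 0 1) 0 := by
      intro t ht
      have := hmin _ (hK.add_smul_sub_mem hzbar hz ht)
      rw [hline] at this
      simpa using this
    have := nonneg_of_isMinOn_of_hasDerivWithinAt hφ
      (hasDerivAt_integral_add_mul_sq ((hKL zbar hzbar).add hq)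
        ((hKL z hz).sub (hKL zbar hzbar))).hasDerivWithinAt
    simp only [Pi.add_apply, Pi.sub_apply] at this
    linarith

theorem integral_mul_sub_nonneg_iff_isUniqueMin {K : Set (α → ℝ)} (hK : Convex ℝ K)
    (hKL : ∀ z ∈ K, MemLp z 2 μ) (hzbar : zbar ∈ K) (hq : MemLp q 2 μ) :
    (∀ z ∈ K, 0 ≤ ∫ x, (zbar x + q x) * (z x - zbar x) ∂μ) ↔
      (∀ z ∈ K, √(∫ x, (zbar x + q x) ^ 2 ∂μ) ≤ √(∫ x, (z x + q x) ^ 2 ∂μ)) ∧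
        ∀ z ∈ K, √(∫ x, (z x + q x) ^ 2 ∂μ) ≤ √(∫ x, (zbar x + q x) ^ 2 ∂μ) →
          z =ᵐ[μ] zbar := by
  have hsqrt : ∀ f g : α → ℝ, √(∫ x, f x ^ 2 ∂μ) ≤ √(∫ x, g x ^ 2 ∂μ) ↔
      ∫ x, f x ^ 2 ∂μ ≤ ∫ x, g x ^ 2 ∂μ := fun _ _ =>
    Real.sqrt_le_sqrt_iff (integral_nonneg fun _ => sq_nonneg _)
  have hproj := integral_mul_sub_nonneg_iff hK hKL hzbar hq
  refine ⟨fun hvi => ⟨fun z hz => ?_, fun z hz hle => ?_⟩, fun hmin => ?_⟩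
  · exact (hsqrt (fun x => zbar x + q x) (fun x => z x + q x)).2 (hproj.1 hvi z hz)
  · exact ae_eq_of_integral_add_sq_le (hKL z hz) (hKL zbar hzbar) hq (hvi z hz)
      ((hsqrt (fun x => z x + q x) (fun x => zbar x + q x)).1 hle)
  · exact hproj.2 fun z hz => (hsqrt (fun x => zbar x + q x) (fun x => z x + q x)).1 (hmin.1 z hz)

end L2

section Gagliardo

variable {N : ℕ} {s : ℝ} {A : Set (RN N × RN N)} {u v w : RN N → ℝ}

theorem Kden_nonneg (x y : RN N) : 0 ≤ Kden N s x y := Real.rpow_nonneg (norm_nonneg _) _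

theorem measurable_Kden : Measurable fun p : RN N × RN N => Kden N s p.1 p.2 := by
  unfold Kden; fun_prop

theorem measurable_gagliardo (hu : Measurable u) (hv : Measurable v) :
    Measurable fun p : RN N × RN N => (u p.1 - u p.2) * (v p.1 - v p.2) / Kden N s p.1 p.2 :=
  (by fun_prop : Measurable fun p : RN N × RN N => (u p.1 - u p.2) * (v p.1 - v p.2)).div
    measurable_Kden

theorem integrableOn_gagliardo_sq (hu : Measurable u) (hE : gagE N s A u < ⊤) :
    IntegrableOn (fun p : RN N × RN N => (u p.1 - u p.2) ^ 2 / Kden N s p.1 p.2) A := by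
  simp_rw [sq]
  exact (lintegral_ofReal_ne_top_iff_integrable
    (measurable_gagliardo hu hu).aestronglyMeasurable
    (ae_of_all _ fun p => div_nonneg (mul_self_nonneg _) (Kden_nonneg _ _))).1
    (by simpa only [gagE, sq] using hE.ne)

theorem integrableOn_gagliardo_mul (hu : Measurable u) (hv : Measurable v)
    (hEu : gagE N s A u < ⊤) (hEv : gagE N s A v < ⊤) :
    IntegrableOn
      (fun p : RN N × RN N => (u p.1 - u p.2) * (v p.1 - v p.2) / Kden N s p.1 p.2) A := by
  refine Integrable.mono'
    (((integrableOn_gagliardo_sq hu hEu).add (integrableOn_gagliardo_sq hv hEv)).div_const 2)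
    (measurable_gagliardo hu hv).aestronglyMeasurable (ae_of_all _ fun p => ?_)
  rw [Real.norm_eq_abs, abs_div, abs_of_nonneg (Kden_nonneg _ _), Pi.add_apply]
  calc |(u p.1 - u p.2) * (v p.1 - v p.2)| / Kden N s p.1 p.2
      ≤ ((u p.1 - u p.2) ^ 2 + (v p.1 - v p.2) ^ 2) / 2 / Kden N s p.1 p.2 := by
        refine div_le_div_of_nonneg_right ?_ (Kden_nonneg _ _)
        rw [abs_mul]
        nlinarith [sq_abs (u p.1 - u p.2), sq_abs (v p.1 - v p.2),
          sq_nonneg (|u p.1 - u p.2| - |v p.1 - v p.2|)]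
    _ = _ := by ring

theorem gagB_comm (u v : RN N → ℝ) : gagB N s A u v = gagB N s A v u := by
  simp only [gagB, mul_comm (u _ - u _)]

theorem gagB_self (hu : Measurable u) : gagB N s A u u = (gagE N s A u).toReal := by
  rw [gagB, gagE, integral_eq_lintegral_of_nonneg_ae
    (ae_of_all _ fun p => div_nonneg (mul_self_nonneg _) (Kden_nonneg _ _))
    (measurable_gagliardo hu hu).aestronglyMeasurable]
  simp only [← sq]

theorem gagB_add_smul_left (hu : Measurable u) (hw : Measurable w) (hv : Measurable v)
    (hEu : gagE N s A u < ⊤) (hEw : gagE N s A w < ⊤) (hEv : gagE N s A v < ⊤) (c : ℝ) :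
    gagB N s A (u + c • w) v = gagB N s A u v + c * gagB N s A w v := by
  rw [gagB, gagB, gagB, ← integral_const_mul, ← integral_add
    (integrableOn_gagliardo_mul hu hv hEu hEv)
    ((integrableOn_gagliardo_mul hw hv hEw hEv).const_mul c)]
  refine integral_congr_ae (ae_of_all _ fun p => ?_)
  simp only [Pi.add_apply, Pi.smul_apply, smul_eq_mul]
  ring

theorem ae_eq_of_gagE_eq_zero (hu : Measurable u)
    (hE : gagE N s A u = 0) : ∀ᵐ p ∂(volume.restrict A), u p.1 = u p.2 := by
  have hm : Measurable fun p : RN N × RN N => (u p.1 - u p.2) ^ 2 / Kden N s p.1 p.2 :=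
    (by fun_prop : Measurable fun p : RN N × RN N => (u p.1 - u p.2) ^ 2).div measurable_Kden
  filter_upwards [(lintegral_eq_zero_iff hm.ennreal_ofReal).1 hE] with p hp
  by_contra hne
  have hK : 0 < Kden N s p.1 p.2 :=
    Real.rpow_pos_of_pos (norm_pos_iff.2 (sub_ne_zero.2 fun h => hne (congrArg u h))) _
  have hpos : 0 < (u p.1 - u p.2) ^ 2 / Kden N s p.1 p.2 :=
    div_pos (by positivity [sub_ne_zero.2 hne]) hK
  exact hpos.not_ge (ENNReal.ofReal_eq_zero.1 hp)

theorem exists_ae_eq_const_of_gagE_eq_zero {Ω : Set (RN N)} (hΩ : volume Ω ≠ 0)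
    (hu : Measurable u) (hE : gagE N s (QSet Ω) u = 0) :
    ∃ c : ℝ, u =ᵐ[volume] fun _ => c := by
  have hsub : Ω ×ˢ (univ : Set (RN N)) ⊆ QSet Ω := fun p hp hp' => hp'.1 hp.1
  have hprod := ae_restrict_of_ae_restrict_of_subset hsub (ae_eq_of_gagE_eq_zero hu hE)
  rw [Measure.volume_eq_prod, ← Measure.prod_restrict, Measure.restrict_univ] at hprod
  have : (ae (volume.restrict Ω)).NeBot := ae_neBot.2 (by rwa [Ne, Measure.restrict_eq_zero])
  obtain ⟨x₀, hx₀⟩ := (Measure.ae_ae_of_ae_prod hprod).exists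
  exact ⟨u x₀, hx₀.mono fun _ hy => hy.symm⟩

end Gagliardo

section Robin

variable {N : ℕ} {s : ℝ} {Ω : Set (RN N)} {κ : RN N → ℝ} {F : (RN N → ℝ) → ℝ}
  {z y u v w : RN N → ℝ}

theorem integral_muMeas (hκm : Measurable κ) (hκ0 : ∀ x, 0 ≤ κ x) (g : RN N → ℝ) :
    ∫ x, g x ∂(muMeas Ω κ) = ∫ x in Ωᶜ, κ x * g x := by
  rw [muMeas, integral_withDensity_eq_integral_toReal_smul hκm.ennreal_ofReal
    (ae_of_all _ fun _ => ENNReal.ofReal_lt_top)]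
  simp only [ENNReal.toReal_ofReal (hκ0 _), smul_eq_mul]

theorem muMeas_absolutelyContinuous : muMeas Ω κ ≪ volume :=
  (withDensity_absolutelyContinuous _ _).trans (Measure.absolutelyContinuous_of_le
    Measure.restrict_le_self)

theorem MemWg.memLp_restrict (hu : MemWg N s Ω κ u) : MemLp u 2 (volume.restrict Ω) := by
  have hum := hu.1
  rw [memLp_two_iff_integrable_sq hum.aestronglyMeasurable]
  exact (lintegral_ofReal_ne_top_iff_integrable (by fun_prop)
    (ae_of_all _ fun _ => sq_nonneg _)).1 hu.2.1.ne

theorem MemWg.memLp_muMeas (hκm : Measurable κ) (hκ0 : ∀ x, 0 ≤ κ x)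
    (hu : MemWg N s Ω κ u) : MemLp u 2 (muMeas Ω κ) := by
  have hum := hu.1
  rw [memLp_two_iff_integrable_sq hum.aestronglyMeasurable, muMeas,
    integrable_withDensity_iff_integrable_smul' hκm.ennreal_ofReal
      (ae_of_all _ fun _ => ENNReal.ofReal_lt_top)]
  have := (lintegral_ofReal_ne_top_iff_integrable (f := fun x => |κ x| * u x ^ 2)
    (hκm.abs.mul (by fun_prop)).aestronglyMeasurable
    (ae_of_all _ fun x => mul_nonneg (abs_nonneg (κ x)) (sq_nonneg (u x)))).1 hu.2.2.1.ne
  simp only [ENNReal.toReal_ofReal (hκ0 _), smul_eq_mul]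
  simpa only [abs_of_nonneg (hκ0 _)] using this

theorem MemWg.add_smul (hκm : Measurable κ) (hu : MemWg N s Ω κ u) (hv : MemWg N s Ω κ v)
    (c : ℝ) : MemWg N s Ω κ (u + c • v) := by
  obtain ⟨hum, hu₁, hu₂, hu₃⟩ := hu
  obtain ⟨hvm, hv₁, hv₂, hv₃⟩ := hv
  refine ⟨hum.add (hvm.const_smul c), ?_, ?_, ?_⟩
  · simpa using lintegral_ofReal_mul_sq_add_smul_lt_top (w := fun _ => 1) (fun _ => zero_le_one)
      measurable_const hum hvm (by simpa using hu₁) (by simpa using hv₁) c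
  · exact lintegral_ofReal_mul_sq_add_smul_lt_top (fun x => abs_nonneg (κ x)) hκm.abs hum hvm
      hu₂ hv₂ c
  · have := lintegral_ofReal_mul_sq_add_smul_lt_top
      (μ := volume.restrict (QSet Ω)) (w := fun p => (Kden N s p.1 p.2)⁻¹)
      (f := fun p => u p.1 - u p.2) (g := fun p => v p.1 - v p.2)
      (fun p => inv_nonneg.2 (Kden_nonneg _ _)) measurable_Kden.inv (by fun_prop)
      (by fun_prop) (by simpa only [gagE, div_eq_inv_mul] using hu₃)
      (by simpa only [gagE, div_eq_inv_mul] using hv₃) c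
    refine lt_of_eq_of_lt (lintegral_congr fun p => congrArg ENNReal.ofReal ?_) this
    simp only [Pi.add_apply, Pi.smul_apply, smul_eq_mul]
    ring

theorem isWeakSolRobin_iff (hκm : Measurable κ) (hκ0 : ∀ x, 0 ≤ κ x) :
    IsWeakSolRobin N s Ω κ F z u ↔ MemWg N s Ω κ u ∧ ∀ v, MemWg N s Ω κ v →
      gagB N s (QSet Ω) u v + ∫ x, u x * v x ∂(muMeas Ω κ) =
        F v + ∫ x, z x * v x ∂(muMeas Ω κ) := by
  simp only [IsWeakSolRobin, integral_muMeas hκm hκ0, mul_assoc]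

theorem IsWeakSolRobin.add_smul (hκm : Measurable κ) (hκ0 : ∀ x, 0 ≤ κ x)
    (hu : IsWeakSolRobin N s Ω κ (fun _ => 0) z u) (hw : IsWeakSolRobin N s Ω κ (fun _ => 0) y w)
    (hz : MemLp z 2 (muMeas Ω κ)) (hy : MemLp y 2 (muMeas Ω κ)) (c : ℝ) :
    IsWeakSolRobin N s Ω κ (fun _ => 0) (z + c • y) (u + c • w) := by
  rw [isWeakSolRobin_iff hκm hκ0] at hu hw ⊢
  refine ⟨hu.1.add_smul hκm hw.1 c, fun v hv => ?_⟩
  have hvμ := hv.memLp_muMeas hκm hκ0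
  have hlin : ∀ {f g : RN N → ℝ}, MemLp f 2 (muMeas Ω κ) → MemLp g 2 (muMeas Ω κ) →
      ∫ x, (f + c • g) x * v x ∂(muMeas Ω κ) =
        ∫ x, f x * v x ∂(muMeas Ω κ) + c * ∫ x, g x * v x ∂(muMeas Ω κ) := fun {f g} hf hg => by
    have hfv : Integrable (fun x => f x * v x) (muMeas Ω κ) := hf.integrable_mul hvμ
    have hgv : Integrable (fun x => g x * v x) (muMeas Ω κ) := hg.integrable_mul hvμ
    rw [← integral_const_mul, ← integral_add hfv (hgv.const_mul c)]
    exact integral_congr_ae (ae_of_all _ fun x => by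
      simp only [Pi.add_apply, Pi.smul_apply, smul_eq_mul]; ring)
  rw [gagB_add_smul_left hu.1.1 hw.1.1 hv.1 hu.1.2.2.2 hw.1.2.2.2 hv.2.2.2,
    hlin (hu.1.memLp_muMeas hκm hκ0) (hw.1.memLp_muMeas hκm hκ0), hlin hz hy]
  linear_combination hu.2 v hv + c * hw.2 v hv

theorem IsWeakSolRobin.sub (hκm : Measurable κ) (hκ0 : ∀ x, 0 ≤ κ x)
    (hu : IsWeakSolRobin N s Ω κ (fun _ => 0) z u) (hw : IsWeakSolRobin N s Ω κ (fun _ => 0) y w)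
    (hz : MemLp z 2 (muMeas Ω κ)) (hy : MemLp y 2 (muMeas Ω κ)) :
    IsWeakSolRobin N s Ω κ (fun _ => 0) (z - y) (u - w) := by
  simpa only [neg_one_smul, ← sub_eq_add_neg] using hu.add_smul hκm hκ0 hw hz hy (-1)

theorem IsWeakSolRobin.apply_eq_integral_mul (hκm : Measurable κ) (hκ0 : ∀ x, 0 ≤ κ x)
    {p : RN N → ℝ} (hu : IsWeakSolRobin N s Ω κ (fun _ => 0) z u)
    (hp : IsWeakSolRobin N s Ω κ F (fun _ => 0) p) :
    F u = ∫ x, z x * p x ∂(muMeas Ω κ) := by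
  rw [isWeakSolRobin_iff hκm hκ0] at hu hp
  have hpu := hp.2 u hu.1
  have hup := hu.2 p hp.1
  simp only [zero_mul, integral_zero, add_zero, zero_add] at hpu hup
  rw [← hpu, ← hup, gagB_comm]
  exact congrArg _ (integral_congr_ae (ae_of_all _ fun x => mul_comm _ _))

theorem IsWeakSolRobin.ae_eq (hκm : Measurable κ) (hκ0 : ∀ x, 0 ≤ κ x)
    (hμ : muMeas Ω κ ≠ 0) (hu : IsWeakSolRobin N s Ω κ (fun _ => 0) z u)
    (hw : IsWeakSolRobin N s Ω κ (fun _ => 0) z w) (hz : MemLp z 2 (muMeas Ω κ)) :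
    u =ᵐ[volume.restrict Ω] w := by
  by_cases hΩ : volume Ω = 0
  · simp [EventuallyEq, Measure.restrict_eq_zero.2 hΩ]
  have hd := hu.sub hκm hκ0 hw hz hz
  rw [isWeakSolRobin_iff hκm hκ0] at hd
  have hdd := hd.2 _ hd.1
  simp only [Pi.sub_apply, sub_self, zero_mul, integral_zero, add_zero] at hdd
  rw [gagB_self hd.1.1] at hdd
  have hL2 : 0 ≤ ∫ x, (u x - w x) * (u x - w x) ∂(muMeas Ω κ) :=
    integral_nonneg fun x => mul_self_nonneg _
  have hE0 : (gagE N s (QSet Ω) (u - w)).toReal = 0 := by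
    linarith [ENNReal.toReal_nonneg (a := gagE N s (QSet Ω) (u - w))]
  obtain ⟨c, hc⟩ := exists_ae_eq_const_of_gagE_eq_zero hΩ hd.1.1
    ((ENNReal.toReal_eq_zero_iff _).1 hE0 |>.resolve_right hd.1.2.2.2.ne)
  have hμ0 : u - w =ᵐ[muMeas Ω κ] 0 := by
    have hint : Integrable (fun x => (u x - w x) * (u x - w x)) (muMeas Ω κ) :=
      (hd.1.memLp_muMeas hκm hκ0).integrable_mul (hd.1.memLp_muMeas hκm hκ0)
    filter_upwards [(integral_eq_zero_iff_of_nonneg (fun x => mul_self_nonneg (u x - w x))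
      hint).1 (by linarith)] with x hx
    exact mul_self_eq_zero.1 hx
  have : (ae (muMeas Ω κ)).NeBot := ae_neBot.2 hμ
  obtain ⟨x₀, hx₀⟩ := ((hc.filter_mono muMeas_absolutelyContinuous.ae_le).symm.trans hμ0).exists
  filter_upwards [ae_restrict_of_ae hc] with x hx
  simpa [hx₀, sub_eq_zero] using hx

end Robin

section Optimality

variable {N : ℕ} {s : ℝ} {Ω : Set (RN N)} {κ : RN N → ℝ} {ξ : ℝ}
  {J : (RN N → ℝ) → ℝ} {DJ : (RN N → ℝ) → RN N → ℝ} {SR : (RN N → ℝ) → RN N → ℝ}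
  {z zbar p : RN N → ℝ}

def reducedCost (J : (RN N → ℝ) → ℝ) (SR : (RN N → ℝ) → RN N → ℝ) (ξ : ℝ)
    (μ : Measure (RN N)) (z : RN N → ℝ) : ℝ :=
  J (SR z) + ξ / 2 * ∫ x, (z x) ^ 2 ∂μ

def firstVariation (μ : Measure (RN N)) (ξ : ℝ) (p zbar z : RN N → ℝ) : ℝ :=
  ∫ x, (z x - zbar x) * p x ∂μ + ξ * ∫ x, zbar x * (z x - zbar x) ∂μ

theorem setIntegral_compl_eq_firstVariation (hκm : Measurable κ) (hκ0 : ∀ x, 0 ≤ κ x)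
    (hp : MemLp p 2 (muMeas Ω κ)) (hz : MemLp z 2 (muMeas Ω κ))
    (hzbar : MemLp zbar 2 (muMeas Ω κ)) :
    ∫ x in Ωᶜ, (p x + ξ * zbar x) * (z x - zbar x) * κ x =
      firstVariation (muMeas Ω κ) ξ p zbar z := by
  have hzp : Integrable (fun x => (z x - zbar x) * p x) (muMeas Ω κ) :=
    (hz.sub hzbar).integrable_mul hp
  have hzz : Integrable (fun x => zbar x * (z x - zbar x)) (muMeas Ω κ) :=
    hzbar.integrable_mul (hz.sub hzbar)
  rw [firstVariation, ← integral_const_mul, ← integral_add hzp (hzz.const_mul ξ),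
    integral_muMeas hκm hκ0]
  exact integral_congr_ae (ae_of_all _ fun x => by ring)

theorem setIntegral_compl_eq_mul_integral (hκm : Measurable κ) (hκ0 : ∀ x, 0 ≤ κ x)
    (hξ : ξ ≠ 0) (p zbar z : RN N → ℝ) :
    ∫ x in Ωᶜ, (p x + ξ * zbar x) * (z x - zbar x) * κ x =
      ξ * ∫ x, (zbar x + p x / ξ) * (z x - zbar x) ∂(muMeas Ω κ) := by
  rw [integral_muMeas hκm hκ0, ← integral_const_mul]
  exact integral_congr_ae (ae_of_all _ fun x => by field_simp; ring)

theorem hasDerivAt_reducedCost_segment (hκm : Measurable κ) (hκ0 : ∀ x, 0 ≤ κ x)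
    (hμ : muMeas Ω κ ≠ 0)
    (hSR : ∀ z, MemLp z 2 (muMeas Ω κ) → IsWeakSolRobin N s Ω κ (fun _ => 0) z (SR z))
    (hJcongr : ∀ u v, u =ᵐ[volume.restrict Ω] v → J u = J v)
    (hJ : HasL2Gradient (volume.restrict Ω) J DJ)
    (hz : MemLp z 2 (muMeas Ω κ)) (hzbar : MemLp zbar 2 (muMeas Ω κ))
    (hp : IsWeakSolRobin N s Ω κ (fun v => ∫ x in Ω, DJ (SR zbar) x * v x) (fun _ => 0) p) :
    HasDerivAt (fun t : ℝ => reducedCost J SR ξ (muMeas Ω κ) (zbar + t • (z - zbar)))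
      (firstVariation (muMeas Ω κ) ξ p zbar z) 0 := by
  have hubar := hSR zbar hzbar
  have hdiff := (hSR z hz).sub hκm hκ0 hubar hz hzbar
  have hcost : ∀ t : ℝ, reducedCost J SR ξ (muMeas Ω κ) (zbar + t • (z - zbar)) =
      J (SR zbar + t • (SR z - SR zbar)) +
        ξ / 2 * ∫ x, (zbar x + t * (z x - zbar x)) ^ 2 ∂(muMeas Ω κ) := fun t => by
    have hzt : MemLp (zbar + t • (z - zbar)) 2 (muMeas Ω κ) :=
      hzbar.add ((hz.sub hzbar).const_smul t)
    rw [reducedCost, hJcongr _ _ ((hSR _ hzt).ae_eq hκm hκ0 hμ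
      (hubar.add_smul hκm hκ0 hdiff hzbar (hz.sub hzbar) t) hzt)]
    rfl
  have hadj := hdiff.apply_eq_integral_mul hκm hκ0 hp
  simp only [Pi.sub_apply] at hadj
  simp_rw [hcost]
  refine ((hJ.hasDerivAt_line hubar.1.memLp_restrict hdiff.1.memLp_restrict).add
    ((hasDerivAt_integral_add_mul_sq hzbar (hz.sub hzbar)).const_mul (ξ / 2))).congr_deriv ?_
  simp only [firstVariation, Pi.sub_apply, hadj]
  ring

theorem firstVariation_nonneg_of_isMinOn (hκm : Measurable κ) (hκ0 : ∀ x, 0 ≤ κ x)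
    (hSR : ∀ z, MemLp z 2 (muMeas Ω κ) → IsWeakSolRobin N s Ω κ (fun _ => 0) z (SR z))
    (hJcongr : ∀ u v, u =ᵐ[volume.restrict Ω] v → J u = J v)
    (hJ : HasL2Gradient (volume.restrict Ω) J DJ) {Zad : Set (RN N → ℝ)}
    (hZconv : Convex ℝ Zad) (hZsub : ∀ z ∈ Zad, MemLp z 2 (muMeas Ω κ))
    (hmin : IsMinOn (reducedCost J SR ξ (muMeas Ω κ)) Zad zbar) (hzbar : zbar ∈ Zad)
    (hp : IsWeakSolRobin N s Ω κ (fun v => ∫ x in Ω, DJ (SR zbar) x * v x) (fun _ => 0) p)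
    (hz : z ∈ Zad) : 0 ≤ firstVariation (muMeas Ω κ) ξ p zbar z := by
  by_cases hμ : muMeas Ω κ = 0
  · simp [firstVariation, hμ]
  refine nonneg_of_isMinOn_of_hasDerivWithinAt (fun t ht => ?_)
    (hasDerivAt_reducedCost_segment hκm hκ0 hμ hSR hJcongr hJ (hZsub z hz) (hZsub zbar hzbar)
      hp).hasDerivWithinAt
  simpa using hmin (hZconv.add_smul_sub_mem hzbar hz ht)

theorem reducedCost_add_firstVariation_le (hκm : Measurable κ) (hκ0 : ∀ x, 0 ≤ κ x)
    (hξ : 0 ≤ ξ)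
    (hSR : ∀ z, MemLp z 2 (muMeas Ω κ) → IsWeakSolRobin N s Ω κ (fun _ => 0) z (SR z))
    (hJ : HasL2Gradient (volume.restrict Ω) J DJ)
    (hconv : ∀ (u v : RN N → ℝ) (t : ℝ), MemLp u 2 (volume.restrict Ω) →
      MemLp v 2 (volume.restrict Ω) → 0 ≤ t → t ≤ 1 →
      J (t • u + (1 - t) • v) ≤ t * J u + (1 - t) * J v)
    (hz : MemLp z 2 (muMeas Ω κ)) (hzbar : MemLp zbar 2 (muMeas Ω κ))
    (hp : IsWeakSolRobin N s Ω κ (fun v => ∫ x in Ω, DJ (SR zbar) x * v x) (fun _ => 0) p) :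
    reducedCost J SR ξ (muMeas Ω κ) zbar + firstVariation (muMeas Ω κ) ξ p zbar z ≤
      reducedCost J SR ξ (muMeas Ω κ) z := by
  have hubar := hSR zbar hzbar
  have hu := hSR z hz
  have hgrad := hJ.integral_mul_sub_le hconv hubar.1.memLp_restrict hu.1.memLp_restrict
  have hadj := (hu.sub hκm hκ0 hubar hz hzbar).apply_eq_integral_mul hκm hκ0 hp
  simp only [Pi.sub_apply] at hadj
  rw [hadj] at hgrad
  have hsq := integral_sq_eq_add hzbar hz
  have hrem := mul_nonneg hξ (integral_sub_sq_nonneg (μ := muMeas Ω κ) z zbar)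
  simp only [reducedCost, firstVariation]
  nlinarith

end Optimality

theorem statement14_general (N : ℕ) (s : ℝ)
    (Ω : Set (RN N))
    (κ : RN N → ℝ) (hκ : AssumpA Ω κ)
    (ξ : ℝ) (hξ : 0 < ξ)
    (SR : (RN N → ℝ) → (RN N → ℝ))
    (hSR : ∀ z, MemLp z 2 (muMeas Ω κ) →
      IsWeakSolRobin N s Ω κ (fun _ => 0) z (SR z))
    (Zad : Set (RN N → ℝ))
    (hZsub : ∀ z ∈ Zad, MemLp z 2 (muMeas Ω κ))
    (hZconv : Convex ℝ Zad)
    -- `J : L²(Ω) → ℝ` continuously Fréchet differentiable with gradient `DJ`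
    (J : (RN N → ℝ) → ℝ) (DJ : (RN N → ℝ) → (RN N → ℝ))
    (hJcongr : ∀ u v, u =ᵐ[volume.restrict Ω] v → J u = J v)
    (hJdiff : ∀ u, MemLp u 2 (volume.restrict Ω) → ∀ ε : ℝ, 0 < ε → ∃ δ : ℝ, 0 < δ ∧
      ∀ h : RN N → ℝ, MemLp h 2 (volume.restrict Ω) →
        Real.sqrt (∫ x in Ω, (h x) ^ 2) ≤ δ →
        |J (u + h) - J u - ∫ x in Ω, DJ u x * h x| ≤
          ε * Real.sqrt (∫ x in Ω, (h x) ^ 2))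
    -- `z̄` is a minimizer
    (zbar : RN N → ℝ) (hzbar : zbar ∈ Zad)
    (hmin : ∀ z ∈ Zad, J (SR zbar) + ξ / 2 * ∫ x, (zbar x) ^ 2 ∂(muMeas Ω κ) ≤
      J (SR z) + ξ / 2 * ∫ x, (z x) ^ 2 ∂(muMeas Ω κ))
    -- `p̄` is the unique weak solution of the Robin adjoint problem
    (pbar : RN N → ℝ)
    (hpbar : IsWeakSolRobin N s Ω κ
      (fun v => ∫ x in Ω, DJ (SR zbar) x * v x) (fun _ => 0) pbar) :
    -- (a) the variational inequality
    (∀ z ∈ Zad,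
      0 ≤ ∫ x in Ωᶜ, (pbar x + ξ * zbar x) * (z x - zbar x) * κ x) ∧
    -- (b) equivalence with the projection formula
    ((∀ z ∈ Zad,
        0 ≤ ∫ x in Ωᶜ, (pbar x + ξ * zbar x) * (z x - zbar x) * κ x) ↔
      ((∀ z ∈ Zad,
          Real.sqrt (∫ x, (zbar x + pbar x / ξ) ^ 2 ∂(muMeas Ω κ)) ≤
            Real.sqrt (∫ x, (z x + pbar x / ξ) ^ 2 ∂(muMeas Ω κ))) ∧
        ∀ z ∈ Zad,
          Real.sqrt (∫ x, (z x + pbar x / ξ) ^ 2 ∂(muMeas Ω κ)) ≤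
              Real.sqrt (∫ x, (zbar x + pbar x / ξ) ^ 2 ∂(muMeas Ω κ)) →
            z =ᵐ[muMeas Ω κ] zbar)) ∧
    -- (c) sufficiency under convexity of `J`
    ((∀ (u v : RN N → ℝ) (t : ℝ), MemLp u 2 (volume.restrict Ω) →
        MemLp v 2 (volume.restrict Ω) → 0 ≤ t → t ≤ 1 →
        J (t • u + (1 - t) • v) ≤ t * J u + (1 - t) * J v) →
      ∀ z' ∈ Zad, ∀ p' : RN N → ℝ,
        IsWeakSolRobin N s Ω κ
          (fun v => ∫ x in Ω, DJ (SR z') x * v x) (fun _ => 0) p' →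
        (∀ z ∈ Zad,
          0 ≤ ∫ x in Ωᶜ, (p' x + ξ * z' x) * (z x - z' x) * κ x) →
        ∀ z ∈ Zad, J (SR z') + ξ / 2 * ∫ x, (z' x) ^ 2 ∂(muMeas Ω κ) ≤
          J (SR z) + ξ / 2 * ∫ x, (z x) ^ 2 ∂(muMeas Ω κ)) := by
  have hκm := hκ.meas
  have hκ0 := hκ.nonneg
  have hpL2 := hpbar.1.memLp_muMeas hκm hκ0
  have hvi : ∀ z ∈ Zad, 0 ≤ ∫ x in Ωᶜ, (pbar x + ξ * zbar x) * (z x - zbar x) * κ x :=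
    fun z hz => by
      rw [setIntegral_compl_eq_firstVariation hκm hκ0 hpL2 (hZsub z hz) (hZsub zbar hzbar)]
      exact firstVariation_nonneg_of_isMinOn hκm hκ0 hSR hJcongr hJdiff hZconv hZsub hmin hzbar
        hpbar hz
  refine ⟨hvi, ?_, fun hconv z' hz' p' hp' hvi' z hz => ?_⟩
  · refine (forall₂_congr fun z _ => ?_).trans (integral_mul_sub_nonneg_iff_isUniqueMin
      (q := fun x => pbar x / ξ) hZconv hZsub hzbar
      (by simpa only [div_eq_mul_inv] using hpL2.mul_const ξ⁻¹))
    rw [setIntegral_compl_eq_mul_integral hκm hκ0 hξ.ne', mul_nonneg_iff_of_pos_left hξ]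
  · have h := reducedCost_add_firstVariation_le hκm hκ0 hξ.le hSR hJdiff hconv (hZsub z hz)
      (hZsub z' hz') hp'
    rw [← setIntegral_compl_eq_firstVariation hκm hκ0 (hp'.1.memLp_muMeas hκm hκ0) (hZsub z hz)
      (hZsub z' hz')] at h
    exact (le_add_of_nonneg_right (hvi' z hz)).trans h

/-- First-order optimality conditions for the fractional Robin exterior
control problem: if `z̄` minimizes `𝒥(z) = J(S_R z) + (ξ/2)‖z‖²_{L²(ℝ^N∖Ω,μ)}` over
`Z_ad`, then `∫_{ℝ^N∖Ω} (p̄ + ξ z̄)(z − z̄) dμ ≥ 0` for all `z ∈ Z_ad`, where `p̄` solves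
the Robin adjoint equation; the variational inequality is equivalent to `z̄` being the
unique minimizer of `z ↦ ‖z + p̄/ξ‖_{L²(ℝ^N∖Ω,μ)}` over `Z_ad`; and if `J` is convex, the
variational inequality is sufficient for global optimality. -/
theorem statement14 (N : ℕ) (hN : 1 ≤ N) (s : ℝ) (hs0 : 0 < s) (hs1 : s < 1)
    (Ω : Set (RN N)) (hΩo : IsOpen Ω) (hΩb : Bornology.IsBounded Ω)
    (hΩl : HasLipschitzBoundary Ω)
    (κ : RN N → ℝ) (hκ : AssumpA Ω κ)
    (ξ : ℝ) (hξ : 0 < ξ)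
    (SR : (RN N → ℝ) → (RN N → ℝ))
    (hSR : ∀ z, MemLp z 2 (muMeas Ω κ) →
      IsWeakSolRobin N s Ω κ (fun _ => 0) z (SR z))
    (Zad : Set (RN N → ℝ)) (hZne : Zad.Nonempty)
    (hZsub : ∀ z ∈ Zad, MemLp z 2 (muMeas Ω κ))
    (hZconv : Convex ℝ Zad)
    (hZcl : ∀ (zseq : ℕ → RN N → ℝ) (z0 : RN N → ℝ), (∀ n, zseq n ∈ Zad) →
      MemLp z0 2 (muMeas Ω κ) →
      Tendsto (fun n => ∫ x, (zseq n x - z0 x) ^ 2 ∂(muMeas Ω κ)) atTop (𝓝 0) →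
      z0 ∈ Zad)
    -- `J : L²(Ω) → ℝ` continuously Fréchet differentiable with gradient `DJ`
    (J : (RN N → ℝ) → ℝ) (DJ : (RN N → ℝ) → (RN N → ℝ))
    (hJcongr : ∀ u v, u =ᵐ[volume.restrict Ω] v → J u = J v)
    (hDJmem : ∀ u, MemLp u 2 (volume.restrict Ω) → MemLp (DJ u) 2 (volume.restrict Ω))
    (hJdiff : ∀ u, MemLp u 2 (volume.restrict Ω) → ∀ ε : ℝ, 0 < ε → ∃ δ : ℝ, 0 < δ ∧
      ∀ h : RN N → ℝ, MemLp h 2 (volume.restrict Ω) →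
        Real.sqrt (∫ x in Ω, (h x) ^ 2) ≤ δ →
        |J (u + h) - J u - ∫ x in Ω, DJ u x * h x| ≤
          ε * Real.sqrt (∫ x in Ω, (h x) ^ 2))
    (hDJcont : ∀ u, MemLp u 2 (volume.restrict Ω) → ∀ ε : ℝ, 0 < ε → ∃ δ : ℝ, 0 < δ ∧
      ∀ u' : RN N → ℝ, MemLp u' 2 (volume.restrict Ω) →
        Real.sqrt (∫ x in Ω, (u' x - u x) ^ 2) ≤ δ →
        Real.sqrt (∫ x in Ω, (DJ u' x - DJ u x) ^ 2) ≤ ε)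
    -- `z̄` is a minimizer
    (zbar : RN N → ℝ) (hzbar : zbar ∈ Zad)
    (hmin : ∀ z ∈ Zad, J (SR zbar) + ξ / 2 * ∫ x, (zbar x) ^ 2 ∂(muMeas Ω κ) ≤
      J (SR z) + ξ / 2 * ∫ x, (z x) ^ 2 ∂(muMeas Ω κ))
    -- `p̄` is the unique weak solution of the Robin adjoint problem
    (pbar : RN N → ℝ)
    (hpbar : IsWeakSolRobin N s Ω κ
      (fun v => ∫ x in Ω, DJ (SR zbar) x * v x) (fun _ => 0) pbar) :
    -- (a) the variational inequality
    (∀ z ∈ Zad,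
      0 ≤ ∫ x in Ωᶜ, (pbar x + ξ * zbar x) * (z x - zbar x) * κ x) ∧
    -- (b) equivalence with the projection formula
    ((∀ z ∈ Zad,
        0 ≤ ∫ x in Ωᶜ, (pbar x + ξ * zbar x) * (z x - zbar x) * κ x) ↔
      ((∀ z ∈ Zad,
          Real.sqrt (∫ x, (zbar x + pbar x / ξ) ^ 2 ∂(muMeas Ω κ)) ≤
            Real.sqrt (∫ x, (z x + pbar x / ξ) ^ 2 ∂(muMeas Ω κ))) ∧
        ∀ z ∈ Zad,
          Real.sqrt (∫ x, (z x + pbar x / ξ) ^ 2 ∂(muMeas Ω κ)) ≤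
              Real.sqrt (∫ x, (zbar x + pbar x / ξ) ^ 2 ∂(muMeas Ω κ)) →
            z =ᵐ[muMeas Ω κ] zbar)) ∧
    -- (c) sufficiency under convexity of `J`
    ((∀ (u v : RN N → ℝ) (t : ℝ), MemLp u 2 (volume.restrict Ω) →
        MemLp v 2 (volume.restrict Ω) → 0 ≤ t → t ≤ 1 →
        J (t • u + (1 - t) • v) ≤ t * J u + (1 - t) * J v) →
      ∀ z' ∈ Zad, ∀ p' : RN N → ℝ,
        IsWeakSolRobin N s Ω κ
          (fun v => ∫ x in Ω, DJ (SR z') x * v x) (fun _ => 0) p' →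
        (∀ z ∈ Zad,
          0 ≤ ∫ x in Ωᶜ, (p' x + ξ * z' x) * (z x - z' x) * κ x) →
        ∀ z ∈ Zad, J (SR z') + ξ / 2 * ∫ x, (z' x) ^ 2 ∂(muMeas Ω κ) ≤
          J (SR z) + ξ / 2 * ∫ x, (z x) ^ 2 ∂(muMeas Ω κ)) :=
  statement14_general N s Ω κ hκ ξ hξ SR hSR Zad hZsub hZconv J DJ hJcongr hJdiff zbar hzbar hmin
    pbar hpbar
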